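/- Let V be a 5-dimensional complex representation of S_3 × C_3 such that every non-identity element of S_3 × {1} and of {1} × C_3 acts with trace −1. Then as an S_3 × C_3 representation, V ≅ (sgn ⊠ triv) ⊕ (std ⊠ χ) ⊕ (std ⊠ χ²), where sgn is the sign representation of S_3, std is the 2-dimensional irreducible representation of S_3, triv is the trivial character of C_3, and χ, χ² are the two nontrivial characters of C_3 (in some order). -/

import Mathlib

/-! For a one-dimensional character `ψ` of a finite group `G`, `|G|⁻¹ ∑ ψ(g) tr ρ(g)` is the
multiplicity of `ψ⁻¹` in `ρ`, hence a natural number. The hypotheses fix `tr ρ` on `S₃ × 1` and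
`1 × C₃`; as `tr ρ` is a class function, the only unknowns left are its values at `(τ, h)`,
`(τ, h²)`, `(σ, h)`, `(σ, h²)` for a transposition `τ`, a 3-cycle `σ` and a generator `h` of `C₃`.
Integrality of the multiplicities of the characters of the abelian subgroup `⟨σ⟩ × C₃` forces
`tr ρ(σ, h) = tr ρ(σ, h²) = 2`. Then, for a nontrivial character `χ` of `C₃`, the multiplicities of
`1 ⊠ χ` and `sgn ⊠ χ` are negatives of each other, so both vanish, and this forces
`tr ρ(τ, h) = tr ρ(τ, h²) = -1`. These are the values of the character of
`(sgn ⊠ triv) ⊕ (std ⊠ χ) ⊕ (std ⊠ χ²)`. -/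

open Module Equiv

def ZMod.powHom {M : Type*} [Monoid M] (n : ℕ) [NeZero n] {g : M} (hg : g ^ n = 1) :
    Multiplicative (ZMod n) →* M where
  toFun x := g ^ x.toAdd.val
  map_one' := by simp
  map_mul' x y := by simp only [toAdd_mul, ZMod.val_add, ← pow_eq_pow_mod _ hg, ← pow_add]

theorem ZMod.powHom_apply {M : Type*} [Monoid M] (n : ℕ) [NeZero n] {g : M} (hg : g ^ n = 1)
    (x : Multiplicative (ZMod n)) : ZMod.powHom n hg x = g ^ x.toAdd.val := rfl

theorem Multiplicative.zmod_three_cases (y : Multiplicative (ZMod 3)) :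
    y = 1 ∨ y = .ofAdd 1 ∨ y = .ofAdd 2 := by
  revert y
  decide

theorem Multiplicative.sum_zmod_three {M : Type*} [AddCommMonoid M]
    (f : Multiplicative (ZMod 3) → M) : ∑ x, f x = f 1 + f (.ofAdd 1) + f (.ofAdd 2) :=
  Fin.sum_univ_three f

theorem Equiv.Perm.sign_conj {α : Type*} [Fintype α] [DecidableEq α] (c g : Perm α) :
    sign (c * g * c⁻¹) = sign g := by
  simp [mul_right_comm]

theorem Equiv.Perm.card_filter_conj_apply_eq_self {α : Type*} [Fintype α] [DecidableEq α]
    (c g : Perm α) :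
    (Finset.univ.filter fun i => (c * g * c⁻¹) i = i).card =
      (Finset.univ.filter fun i => g i = i).card := by
  rw [← Finset.card_map c.toEmbedding (s := Finset.univ.filter fun i => g i = i)]
  congr 1
  ext i
  simp only [Finset.mem_filter, Finset.mem_univ, true_and, Finset.mem_map_equiv,
    Perm.mul_apply, ← Perm.eq_inv_iff_eq (f := c), Perm.inv_def]

theorem Equiv.Perm.exists_conj_fin_three (g : Perm (Fin 3)) :
    ∃ c, ∃ r ∈ ({1, swap 0 1, finRotate 3} : Finset (Perm (Fin 3))), g = c * r * c⁻¹ := by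
  revert g
  decide

theorem Equiv.Perm.sum_fin_three_of_conj {M : Type*} [AddCommMonoid M] (f : Perm (Fin 3) → M)
    (hf : ∀ c g, f (c * g * c⁻¹) = f g) :
    ∑ g, f g = f 1 + 3 • f (swap 0 1) + 2 • f (finRotate 3) := by
  have huniv : (Finset.univ : Finset (Perm (Fin 3))) =
      {1, swap 0 1, swap 0 2, swap 1 2, finRotate 3, finRotate 3 ^ 2} := by decide
  have h02 : f (swap 0 2) = f (swap 0 1) := by
    rw [show swap (0 : Fin 3) 2 = swap 1 2 * swap 0 1 * (swap 1 2)⁻¹ by decide, hf]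
  have h12 : f (swap 1 2) = f (swap 0 1) := by
    rw [show swap (1 : Fin 3) 2 = swap 0 2 * swap 0 1 * (swap 0 2)⁻¹ by decide, hf]
  have hrot : f (finRotate 3 ^ 2) = f (finRotate 3) := by
    rw [show finRotate 3 ^ 2 = swap 0 1 * finRotate 3 * (swap 0 1)⁻¹ by decide, hf]
  rw [huniv, Finset.sum_insert (by decide), Finset.sum_insert (by decide),
    Finset.sum_insert (by decide), Finset.sum_insert (by decide),
    Finset.sum_insert (by decide), Finset.sum_singleton, h02, h12, hrot]
  abel

theorem IsPrimitiveRoot.sq_add_add_one_eq_zero {R : Type*} [CommRing R] [IsDomain R] {ζ : R}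
    (hζ : IsPrimitiveRoot ζ 3) : ζ ^ 2 + ζ + 1 = 0 := by
  have h := hζ.geom_sum_eq_zero (by norm_num)
  simp only [Finset.sum_range_succ, Finset.sum_range_zero, zero_add, pow_zero, pow_one] at h
  linear_combination h

theorem IsPrimitiveRoot.pow_val_add_pow_two_mul_val {R : Type*} [CommRing R] [IsDomain R] {ζ : R}
    (hζ : IsPrimitiveRoot ζ 3) (y : Multiplicative (ZMod 3)) :
    ζ ^ y.toAdd.val + ζ ^ (2 * y.toAdd.val) = if y = 1 then 2 else -1 := by
  have hq := hζ.sq_add_add_one_eq_zero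
  rcases Multiplicative.zmod_three_cases y with rfl | rfl | rfl
  · norm_num [one_add_one_eq_two]
  · rw [if_neg (by decide), toAdd_ofAdd, ZMod.val_one]
    linear_combination hq
  · rw [if_neg (by decide), toAdd_ofAdd, show (2 : ZMod 3).val = 2 from rfl]
    linear_combination hq + ζ * hζ.pow_eq_one

theorem eq_two_of_forall_exists_nat {a b : ℂ}
    (h : ∀ z w : ℂ, z ^ 3 = 1 → w ^ 3 = 1 →
      ∃ n : ℕ, 5 - (w + w ^ 2) + (z + z ^ 2) * (-1 + w * a + w ^ 2 * b) = 9 * n) :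
    a = 2 ∧ b = 2 := by
  obtain ⟨ζ, hζ⟩ : ∃ ζ : ℂ, IsPrimitiveRoot ζ 3 := ⟨_, Complex.isPrimitiveRoot_exp 3 (by norm_num)⟩
  have hζ3 : ζ ^ 3 = 1 := hζ.pow_eq_one
  have hq := hζ.sq_add_add_one_eq_zero
  have hζ23 : (ζ ^ 2) ^ 3 = 1 := by rw [pow_right_comm, hζ3, one_pow]
  have hs : ζ + ζ ^ 2 = -1 := by linear_combination hq
  have hs' : ζ ^ 2 + ζ = -1 := by linear_combination hq
  have hζ4 : (ζ ^ 2) ^ 2 = ζ := by linear_combination ζ * hζ3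
  obtain ⟨n₁, h₁⟩ := h 1 1 (one_pow 3) (one_pow 3)
  obtain ⟨n₂, h₂⟩ := h ζ 1 hζ3 (one_pow 3)
  obtain ⟨n₃, h₃⟩ := h 1 ζ (one_pow 3) hζ3
  obtain ⟨n₄, h₄⟩ := h ζ ζ hζ3 hζ3
  obtain ⟨n₅, h₅⟩ := h 1 (ζ ^ 2) (one_pow 3) hζ23
  obtain ⟨n₆, h₆⟩ := h ζ (ζ ^ 2) hζ3 hζ23
  simp only [one_pow, one_mul, hζ4, hs, hs'] at h₁ h₂ h₃ h₄ h₅ h₆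
  have hn₁₂ : n₁ + 2 * n₂ = 1 := by
    exact_mod_cast (by linear_combination -(h₁ + 2 * h₂) / 9 : (n₁ + 2 * n₂ : ℂ) = 1)
  have hn₃₄ : n₃ + 2 * n₄ = 2 := by
    exact_mod_cast (by linear_combination -(h₃ + 2 * h₄) / 9 : (n₃ + 2 * n₄ : ℂ) = 2)
  have hn₅₆ : n₅ + 2 * n₆ = 2 := by
    exact_mod_cast (by linear_combination -(h₅ + 2 * h₆) / 9 : (n₅ + 2 * n₆ : ℂ) = 2)
  obtain rfl : n₂ = 0 := by omega
  have hab : a + b = 4 := by linear_combination -h₂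
  -- With `X = ζ a + ζ² b` and `Y = ζ² a + ζ b`, `h₄` and `h₆` read `7 - X = 9 n₄`, `7 - Y = 9 n₆`,
  -- and `X + Y = -(a + b) = -4`; as `n₄, n₆ ≤ 1`, both equal `1`.
  have hn₄₆ : n₄ + n₆ = 2 := by
    exact_mod_cast
      (by linear_combination (hab - h₄ - h₆ - (a + b) * hq) / 9 : (n₄ + n₆ : ℂ) = 2)
  obtain ⟨rfl, rfl⟩ : n₄ = 1 ∧ n₆ = 1 := by omega
  have ha : a = 2 := by
    linear_combination (hab - ζ ^ 2 * h₄ - ζ * h₆ - (2 * a + b * ζ) * hζ3 - (b + 2) * hq) / 3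
  exact ⟨ha, by linear_combination hab - ha⟩

theorem eq_neg_one_of_forall_mul_add_eq_one {c d : ℂ}
    (h : ∀ w : ℂ, w ^ 3 = 1 → w ≠ 1 → w * c + w ^ 2 * d = 1) : c = -1 ∧ d = -1 := by
  obtain ⟨ζ, hζ⟩ : ∃ ζ : ℂ, IsPrimitiveRoot ζ 3 := ⟨_, Complex.isPrimitiveRoot_exp 3 (by norm_num)⟩
  have hζ3 : ζ ^ 3 = 1 := hζ.pow_eq_one
  have hq := hζ.sq_add_add_one_eq_zero
  have h₁ := h ζ hζ3 (hζ.ne_one (by norm_num))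
  have h₂ := h (ζ ^ 2) (by rw [pow_right_comm, hζ3, one_pow])
    (hζ.pow_ne_one_of_pos_of_lt (by norm_num) (by norm_num))
  rw [show (ζ ^ 2) ^ 2 = ζ by linear_combination ζ * hζ3] at h₂
  have hc : c = -1 := by
    linear_combination (ζ ^ 2 * h₁ + ζ * h₂ - h₁ - h₂ - (2 * c + d * ζ) * hζ3 + (c + 1) * hq) / 3
  exact ⟨hc, by linear_combination -(h₁ + h₂) + (c + d) * hq - hc⟩

namespace Representation

section Twist
variable {k G V : Type*} [Field k] [Group G] [AddCommGroup V] [Module k V]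

def twist (π : Representation k G V) (ψ : G →* k) : Representation k G V where
  toFun g := ψ g • π g
  map_one' := by simp
  map_mul' a b := by rw [map_mul, map_mul, mul_smul_mul_comm]

theorem char_twist (π : Representation k G V) (ψ : G →* k) (g : G) :
    (π.twist ψ).character g = ψ g * π.character g :=
  LinearMap.trace k V |>.map_smul (ψ g) (π g)

theorem exists_sum_mul_char_eq_card_mul [Fintype G] [Invertible (Nat.card G : k)]
    [FiniteDimensional k V] (π : Representation k G V) (ψ : G →* k) :
    ∃ n : ℕ, ∑ g, ψ g * π.character g = Nat.card G * n := by
  refine ⟨finrank k (invariants (π.twist ψ)), ?_⟩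
  rw [← card_inv_mul_sum_char_eq_finrank, mul_inv_cancel_left₀ (Invertible.ne_zero _)]
  simp only [char_twist]

end Twist

section PermFinThreeProd
variable {k H V : Type*} [Field k] [Group H] [AddCommGroup V] [Module k V]

theorem char_conj_fst (ρ : Representation k (Perm (Fin 3) × H) V) (c g : Perm (Fin 3)) (y : H) :
    ρ.character (c * g * c⁻¹, y) = ρ.character (g, y) := by
  simpa using ρ.char_conj (g, y) (c, 1)

variable [Fintype H]

theorem sum_char_perm_fin_three_prod (ρ : Representation k (Perm (Fin 3) × H) V) :
    ∑ x, ρ.character x = ∑ y, (ρ.character (1, y) + 3 * ρ.character (swap 0 1, y) +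
      2 * ρ.character (finRotate 3, y)) := by
  rw [Fintype.sum_prod_type, Finset.sum_comm]
  refine Finset.sum_congr rfl fun y _ => ?_
  rw [Perm.sum_fin_three_of_conj (fun g => ρ.character (g, y)) (ρ.char_conj_fst · · y),
    nsmul_eq_mul, nsmul_eq_mul]
  push_cast
  ring

variable [CharZero k] [FiniteDimensional k V]

theorem exists_sum_char_perm_fin_three_prod (ρ : Representation k (Perm (Fin 3) × H) V)
    (ψ : Perm (Fin 3) × H →* k) :
    ∃ n : ℕ, ∑ y, (ψ (1, y) * ρ.character (1, y) +
      3 * (ψ (swap 0 1, y) * ρ.character (swap 0 1, y)) +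
      2 * (ψ (finRotate 3, y) * ρ.character (finRotate 3, y))) = 6 * Fintype.card H * n := by
  have : Invertible (Nat.card (Perm (Fin 3) × H) : k) := invertibleOfNonzero (by simp)
  obtain ⟨n, hn⟩ := ρ.exists_sum_mul_char_eq_card_mul ψ
  refine ⟨n, ?_⟩
  simp only [← char_twist] at hn ⊢
  rw [← sum_char_perm_fin_three_prod, hn]
  simp [Fintype.card_perm, Nat.factorial]

theorem exists_sum_char_rotate_prod (ρ : Representation k (Perm (Fin 3) × H) V)
    (ψ : Multiplicative (ZMod 3) × H →* k) :
    ∃ n : ℕ, ∑ y, (ψ (1, y) * ρ.character (1, y) +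
      (ψ (.ofAdd 1, y) + ψ (.ofAdd 2, y)) * ρ.character (finRotate 3, y)) =
        3 * Fintype.card H * n := by
  have : Invertible (Nat.card (Multiplicative (ZMod 3) × H) : k) := invertibleOfNonzero (by simp)
  let ι := (ZMod.powHom 3 (by decide : finRotate 3 ^ 3 = 1)).prodMap (MonoidHom.id H)
  obtain ⟨n, hn⟩ := exists_sum_mul_char_eq_card_mul (ρ.comp ι) ψ
  refine ⟨n, ?_⟩
  rw [Fintype.sum_prod_type, Finset.sum_comm] at hn
  have hι (x : Multiplicative (ZMod 3)) (y : H) :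
      character (ρ.comp ι) (x, y) = ρ.character (finRotate 3 ^ x.toAdd.val, y) := rfl
  have hrot (y : H) : ρ.character (finRotate 3 ^ 2, y) = ρ.character (finRotate 3, y) := by
    rw [show finRotate 3 ^ 2 = swap 0 1 * finRotate 3 * (swap 0 1)⁻¹ by decide, char_conj_fst]
  simp only [Multiplicative.sum_zmod_three, hι, toAdd_one, toAdd_ofAdd, ZMod.val_zero,
    ZMod.val_one, show (2 : ZMod 3).val = 2 from rfl, pow_zero, pow_one, hrot] at hn
  simp only [add_mul, ← add_assoc, hn, Nat.card_eq_fintype_card, Fintype.card_prod,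
    Fintype.card_multiplicative, ZMod.card, Nat.cast_mul, Nat.cast_ofNat]

end PermFinThreeProd

end Representation

section
variable {V : Type*} [AddCommGroup V] [Module ℂ V] [FiniteDimensional ℂ V]
  {ρ : Representation ℂ (Perm (Fin 3) × Multiplicative (ZMod 3)) V}

/-- The left side is `∑ i j, z ^ i * w ^ j * tr ρ(σ ^ i, h ^ j)` with the known values inserted. -/
theorem exists_nat_of_char_rotate (hdim : finrank ℂ V = 5)
    (hS3 : ∀ g : Perm (Fin 3), g ≠ 1 → ρ.character (g, 1) = -1)
    (hC3 : ∀ h : Multiplicative (ZMod 3), h ≠ 1 → ρ.character (1, h) = -1)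
    {z w : ℂ} (hz : z ^ 3 = 1) (hw : w ^ 3 = 1) :
    ∃ n : ℕ, 5 - (w + w ^ 2) + (z + z ^ 2) * (-1 + w * ρ.character (finRotate 3, .ofAdd 1) +
      w ^ 2 * ρ.character (finRotate 3, .ofAdd 2)) = 9 * n := by
  obtain ⟨n, hn⟩ := ρ.exists_sum_char_rotate_prod ((ZMod.powHom 3 hz).coprod (ZMod.powHom 3 hw))
  refine ⟨n, ?_⟩
  simp only [Multiplicative.sum_zmod_three, MonoidHom.coprod_apply, ZMod.powHom_apply,
    toAdd_one, toAdd_ofAdd, ZMod.val_zero, ZMod.val_one, show (2 : ZMod 3).val = 2 from rfl,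
    pow_zero, pow_one, mul_one, Fintype.card_multiplicative, ZMod.card, Prod.mk_one_one,
    Representation.char_one, hdim, hS3 _ (by decide : finRotate 3 ≠ 1),
    hC3 _ (by decide : (.ofAdd 1 : Multiplicative (ZMod 3)) ≠ 1),
    hC3 _ (by decide : (.ofAdd 2 : Multiplicative (ZMod 3)) ≠ 1)] at hn
  push_cast at hn
  linear_combination hn

theorem char_rotate_eq_two (hdim : finrank ℂ V = 5)
    (hS3 : ∀ g : Perm (Fin 3), g ≠ 1 → ρ.character (g, 1) = -1)
    (hC3 : ∀ h : Multiplicative (ZMod 3), h ≠ 1 → ρ.character (1, h) = -1)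
    (y : Multiplicative (ZMod 3)) (hy : y ≠ 1) : ρ.character (finRotate 3, y) = 2 := by
  obtain ⟨ha, hb⟩ := eq_two_of_forall_exists_nat
    fun _ _ hz hw => exists_nat_of_char_rotate hdim hS3 hC3 hz hw
  rcases Multiplicative.zmod_three_cases y with rfl | rfl | rfl
  exacts [absurd rfl hy, ha, hb]

/-- The left side is `∑ g j, ε g * w ^ j * tr ρ(g, h ^ j)` with the known values inserted. -/
theorem exists_nat_of_char_swap (hdim : finrank ℂ V = 5)
    (hS3 : ∀ g : Perm (Fin 3), g ≠ 1 → ρ.character (g, 1) = -1)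
    (hC3 : ∀ h : Multiplicative (ZMod 3), h ≠ 1 → ρ.character (1, h) = -1)
    (ε : Perm (Fin 3) →* ℂ) {w : ℂ} (hw : w ^ 3 = 1) (hw1 : w ≠ 1) :
    ∃ n : ℕ, 3 * ε (swap 0 1) * (w * ρ.character (swap 0 1, .ofAdd 1) +
      w ^ 2 * ρ.character (swap 0 1, .ofAdd 2) - 1) + 6 * (1 - ε (finRotate 3)) = 18 * n := by
  have hq : w ^ 2 + w + 1 = 0 := by
    refine (mul_eq_zero.mp ?_).resolve_left (sub_ne_zero.mpr hw1)
    linear_combination hw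
  have hrot (y : Multiplicative (ZMod 3)) (hy : y ≠ 1) := char_rotate_eq_two hdim hS3 hC3 y hy
  obtain ⟨n, hn⟩ := ρ.exists_sum_char_perm_fin_three_prod (ε.coprod (ZMod.powHom 3 hw))
  refine ⟨n, ?_⟩
  simp only [Multiplicative.sum_zmod_three, MonoidHom.coprod_apply, ZMod.powHom_apply,
    toAdd_one, toAdd_ofAdd, ZMod.val_zero, ZMod.val_one, show (2 : ZMod 3).val = 2 from rfl,
    pow_zero, pow_one, mul_one, map_one, Fintype.card_multiplicative, ZMod.card,
    Prod.mk_one_one, Representation.char_one, hdim,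
    hS3 _ (by decide : finRotate 3 ≠ 1), hS3 _ (by decide : swap (0 : Fin 3) 1 ≠ 1),
    hC3 _ (by decide : (.ofAdd 1 : Multiplicative (ZMod 3)) ≠ 1),
    hC3 _ (by decide : (.ofAdd 2 : Multiplicative (ZMod 3)) ≠ 1),
    hrot _ (by decide : (.ofAdd 1 : Multiplicative (ZMod 3)) ≠ 1),
    hrot _ (by decide : (.ofAdd 2 : Multiplicative (ZMod 3)) ≠ 1)] at hn
  push_cast at hn
  linear_combination hn + (1 - 4 * ε (finRotate 3)) * hq

theorem char_swap_mul_add (hdim : finrank ℂ V = 5)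
    (hS3 : ∀ g : Perm (Fin 3), g ≠ 1 → ρ.character (g, 1) = -1)
    (hC3 : ∀ h : Multiplicative (ZMod 3), h ≠ 1 → ρ.character (1, h) = -1)
    {w : ℂ} (hw : w ^ 3 = 1) (hw1 : w ≠ 1) :
    w * ρ.character (swap 0 1, .ofAdd 1) + w ^ 2 * ρ.character (swap 0 1, .ofAdd 2) = 1 := by
  obtain ⟨n₁, h₁⟩ := exists_nat_of_char_swap hdim hS3 hC3 1 hw hw1
  obtain ⟨n₂, h₂⟩ := exists_nat_of_char_swap hdim hS3 hC3
    ((Int.castRingHom ℂ).toMonoidHom.comp ((Units.coeHom ℤ).comp Perm.sign)) hw hw1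
  simp only [MonoidHom.one_apply, mul_one, sub_self, mul_zero, add_zero] at h₁
  norm_num [sign_finRotate] at h₂
  have : n₁ + n₂ = 0 := by
    exact_mod_cast (by linear_combination -(h₁ + h₂) / 18 : (n₁ + n₂ : ℂ) = 0)
  obtain rfl : n₁ = 0 := by omega
  linear_combination h₁ / 3

theorem char_swap_eq_neg_one (hdim : finrank ℂ V = 5)
    (hS3 : ∀ g : Perm (Fin 3), g ≠ 1 → ρ.character (g, 1) = -1)
    (hC3 : ∀ h : Multiplicative (ZMod 3), h ≠ 1 → ρ.character (1, h) = -1)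
    (y : Multiplicative (ZMod 3)) (hy : y ≠ 1) : ρ.character (swap 0 1, y) = -1 := by
  obtain ⟨hc, hd⟩ := eq_neg_one_of_forall_mul_add_eq_one
    fun _ hw hw1 => char_swap_mul_add hdim hS3 hC3 hw hw1
  rcases Multiplicative.zmod_three_cases y with rfl | rfl | rfl
  exacts [absurd rfl hy, hc, hd]

theorem char_eq_sign_add (hdim : finrank ℂ V = 5)
    (hS3 : ∀ g : Perm (Fin 3), g ≠ 1 → ρ.character (g, 1) = -1)
    (hC3 : ∀ h : Multiplicative (ZMod 3), h ≠ 1 → ρ.character (1, h) = -1)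
    (g : Perm (Fin 3)) (y : Multiplicative (ZMod 3)) :
    ρ.character (g, y) = (Perm.sign g : ℤ) +
      ((Finset.univ.filter fun i => g i = i).card - 1) * (if y = 1 then 2 else -1) := by
  obtain ⟨c, r, hr, rfl⟩ := Perm.exists_conj_fin_three g
  rw [ρ.char_conj_fst, Perm.sign_conj, Perm.card_filter_conj_apply_eq_self]
  simp only [Finset.mem_insert, Finset.mem_singleton] at hr
  have hτ : (Finset.univ.filter fun i => swap (0 : Fin 3) 1 i = i).card = 1 := by decide
  rcases hr with rfl | rfl | rfl <;> by_cases hy : y = 1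
  · subst hy
    rw [Prod.mk_one_one, ρ.char_one, hdim]
    norm_num
  · norm_num [hy, hC3 y hy]
  · subst hy
    norm_num [hS3, hτ]
  · norm_num [hy, hτ, char_swap_eq_neg_one hdim hS3 hC3 y hy]
  · subst hy
    norm_num [hS3 _ (by decide : finRotate 3 ≠ 1)]
  · norm_num [hy, char_rotate_eq_two hdim hS3 hC3 y hy]

end

/-- Character-theoretic form of: a 5-dimensional complex representation V of S₃ × C₃ on
which every non-identity element of S₃ × {1} and of {1} × C₃ acts with trace −1 is
isomorphic to (sgn ⊠ triv) ⊕ (std ⊠ χ) ⊕ (std ⊠ χ²) for the two nontrivial characters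
χ, χ² of C₃ in some order. Since complex representations of a finite group are
determined up to isomorphism by their characters, we express the conclusion as the
equality of the character of V with that of the stated direct sum: for some primitive
cube root of unity ζ (the choice of ζ versus ζ² accounting for "in some order"),
tr ρ(g,h) = sgn(g) + χ_std(g)·(ζ^h + ζ^{2h}), where χ_std(g) = #fix(g) − 1 is the
character of the standard 2-dimensional representation of S₃. -/
theorem stmt13 (V : Type*) [AddCommGroup V] [Module ℂ V] [FiniteDimensional ℂ V]
    (ρ : Representation ℂ (Equiv.Perm (Fin 3) × Multiplicative (ZMod 3)) V)
    (hdim : finrank ℂ V = 5)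
    (hS3 : ∀ g : Equiv.Perm (Fin 3), g ≠ 1 → LinearMap.trace ℂ V (ρ (g, 1)) = -1)
    (hC3 : ∀ h : Multiplicative (ZMod 3), h ≠ 1 → LinearMap.trace ℂ V (ρ (1, h)) = -1) :
    ∃ ζ : ℂ, IsPrimitiveRoot ζ 3 ∧
      ∀ (g : Equiv.Perm (Fin 3)) (h : Multiplicative (ZMod 3)),
        LinearMap.trace ℂ V (ρ (g, h)) =
          ((Equiv.Perm.sign g : ℤ) : ℂ) +
            (((Finset.univ.filter fun i => g i = i).card : ℂ) - 1) *
              (ζ ^ (ZMod.val (Multiplicative.toAdd h)) +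
                ζ ^ (2 * ZMod.val (Multiplicative.toAdd h))) := by
  have hζ := Complex.isPrimitiveRoot_exp 3 (by norm_num)
  refine ⟨_, hζ, fun g y => ?_⟩
  rw [hζ.pow_val_add_pow_two_mul_val]
  exact char_eq_sign_add hdim hS3 hC3 g y
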